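/- arXiv:1206.5694 — 2 statements merged into one kernel-verified Lean document; each statement's English description precedes it below -/
import Mathlib

section
/- Let ρ: l → r ⇐ s_1 ↠ t_1; …; s_k ↠ t_k be an extended deterministic conditional rewrite rule. Then ρ is ultra-left-linear w.r.t. the optimized unraveling U_opt (i.e., every rule of U_opt(ρ) is left-linear) if and only if all of l, t_1, …, t_k are linear and Var(t_i) ∩ X_i = ∅ for all 1 ≤ i ≤ k. -/
set_option maxHeartbeats 1000000

universe u

/-! ## Terms -/

inductive Term (α : Type u) : Type u where
  | var : ℕ → Term α
  | app : α → List (Term α) → Term α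

namespace Term

variable {α : Type u}

/-- The list of variable occurrences of a term (left-to-right). -/
def varList : Term α → List ℕ
  | var x => [x]
  | app _ ts => ts.attach.foldr (fun t acc => varList t.1 ++ acc) []
decreasing_by
  simp only [Term.app.sizeOf_spec]
  have := List.sizeOf_lt_of_mem t.2
  omega

/-- The list of (function symbol, number of arguments) occurrences of a term. -/
def apps : Term α → List (α × ℕ)
  | var _ => []
  | app f ts => (f, ts.length) :: ts.attach.foldr (fun t acc => apps t.1 ++ acc) []
decreasing_by
  simp only [Term.app.sizeOf_spec]
  have := List.sizeOf_lt_of_mem t.2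
  omega

/-- `Var(t)`: the set of variables of a term. -/
def varFinset (t : Term α) : Finset ℕ := t.varList.toFinset

/-- All function symbols of the term belong to the signature `F`. -/
def overSig (F : Set α) (t : Term α) : Prop := ∀ p ∈ t.apps, p.1 ∈ F

/-- `t ∈ T(F,V)`: all function symbols belong to `F` and are applied
according to their arities. -/
def inT (F : Set α) (ar : α → ℕ) (t : Term α) : Prop :=
  ∀ p ∈ t.apps, p.1 ∈ F ∧ ar p.1 = p.2

/-- A term is linear if no variable occurs twice in it. -/
def Linear (t : Term α) : Prop := t.varList.Nodup

/-- A term is ground if it contains no variable. -/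
def Ground (t : Term α) : Prop := t.varList = []

/-- Applying a substitution to a term. -/
def subst (σ : ℕ → Term α) : Term α → Term α
  | var x => σ x
  | app f ts => app f (ts.attach.map (fun t => subst σ t.1))
decreasing_by
  simp only [Term.app.sizeOf_spec]
  have := List.sizeOf_lt_of_mem t.2
  omega

def isVar : Term α → Prop
  | var _ => True
  | app _ _ => False

def root? : Term α → Option α
  | var _ => none
  | app f _ => some f

def args : Term α → List (Term α)
  | var _ => []
  | app _ ts => ts

end Term

def junkPair {α : Type u} : Term α × Term α := (Term.var 0, Term.var 0)

/-! ## Conditional rewrite rules -/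

/-- An extended (oriented) conditional rewrite rule `l → r ⇐ s₁ ↠ t₁; …; s_k ↠ t_k`,
where `conds` is the list of pairs `(sᵢ, tᵢ)`. -/
structure ERule (α : Type u) : Type u where
  lhs : Term α
  rhs : Term α
  conds : List (Term α × Term α)

namespace ERule

variable {α : Type u}

def nonLV (ρ : ERule α) : Prop := ¬ ρ.lhs.isVar
def nonRV (ρ : ERule α) : Prop := ¬ ρ.rhs.isVar

/-- `X_{j+1} = Var(l, t_1, …, t_j)` (0-based index `j`). -/
def Xset (ρ : ERule α) (j : ℕ) : Finset ℕ :=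
  ρ.lhs.varFinset ∪ ((ρ.conds.take j).map (fun c => c.2.varFinset)).foldr (· ∪ ·) ∅

/-- `Y_{j+1} = Var(r, t_{j+1}, s_{j+2}, t_{j+2}, …, s_k, t_k)` (0-based index `j`). -/
def Yset (ρ : ERule α) (j : ℕ) : Finset ℕ :=
  ρ.rhs.varFinset ∪ (ρ.conds.getD j junkPair).2.varFinset ∪
    ((ρ.conds.drop (j+1)).map (fun c => c.1.varFinset ∪ c.2.varFinset)).foldr (· ∪ ·) ∅

/-- `Z_i = X_i ∩ Y_i`. -/
def Zset (ρ : ERule α) (j : ℕ) : Finset ℕ := ρ.Xset j ∩ ρ.Yset j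

/-- Determinism: `Var(sᵢ) ⊆ Var(l, t₁, …, t_{i-1})`. -/
def Det (ρ : ERule α) : Prop :=
  ∀ j < ρ.conds.length, (ρ.conds.getD j junkPair).1.varFinset ⊆ ρ.Xset j

/-- Type 3: `Var(r) ⊆ Var(l, s₁, t₁, …, s_k, t_k)`. -/
def Type3 (ρ : ERule α) : Prop :=
  ρ.rhs.varFinset ⊆
    ρ.lhs.varFinset ∪ ((ρ.conds.map (fun c => c.1.varFinset ∪ c.2.varFinset)).foldr (· ∪ ·) ∅)

/-- Left-linearity of a rule. -/
def LL (ρ : ERule α) : Prop := ρ.lhs.Linear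
/-- Right-linearity of a rule. -/
def RL (ρ : ERule α) : Prop := ρ.rhs.Linear
/-- Non-erasingness of a rule: `Var(l) ⊆ Var(r)`. -/
def NE (ρ : ERule α) : Prop := ρ.lhs.varFinset ⊆ ρ.rhs.varFinset

/-- `EVar(l → r) = Var(r) \\ Var(l)`, the extra variables of a rule. -/
def extraVars (ρ : ERule α) : Finset ℕ := ρ.rhs.varFinset \ ρ.lhs.varFinset

/-- The inverted rule `(l → r ⇐ s₁ ↠ t₁; …; s_k ↠ t_k)⁻¹ = r → l ⇐ t_k ↠ s_k; …; t₁ ↠ s₁`. -/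
def inv (ρ : ERule α) : ERule α :=
  ⟨ρ.rhs, ρ.lhs, (ρ.conds.map (fun c => (c.2, c.1))).reverse⟩

def allVarFinset (ρ : ERule α) : Finset ℕ :=
  ρ.lhs.varFinset ∪ ρ.rhs.varFinset ∪
    ((ρ.conds.map (fun c => c.1.varFinset ∪ c.2.varFinset)).foldr (· ∪ ·) ∅)

/-- A number strictly larger than every variable of the rule; used to pick fresh variables. -/
def freshBase (ρ : ERule α) : ℕ := ρ.allVarFinset.sup id + 1

/-- All terms of the rule use only symbols of `F`. -/
def overSig (F : Set α) (ρ : ERule α) : Prop :=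
  ρ.lhs.overSig F ∧ ρ.rhs.overSig F ∧ ∀ c ∈ ρ.conds, c.1.overSig F ∧ c.2.overSig F

/-- All terms of the rule are in `T(F,V)` (symbols of `F`, arity-correct). -/
def inT (F : Set α) (ar : α → ℕ) (ρ : ERule α) : Prop :=
  ρ.lhs.inT F ar ∧ ρ.rhs.inT F ar ∧ ∀ c ∈ ρ.conds, c.1.inT F ar ∧ c.2.inT F ar

end ERule

/-! ## Reduction relations -/

/-- One-hole contexts. -/
inductive Ctx (α : Type u) : Type u where
  | hole : Ctx α
  | app : α → List (Term α) → Ctx α → List (Term α) → Ctx α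

def Ctx.plug {α : Type u} : Ctx α → Term α → Term α
  | .hole, t => t
  | .app f pre c post, t => .app f (pre ++ c.plug t :: post)

/-- The approximations `→_{(n),R}` of the reduction relation of an oriented eCTRS. -/
def RedN {α : Type u} (R : Set (ERule α)) : ℕ → Term α → Term α → Prop
  | 0 => fun _ _ => False
  | n + 1 => fun s t =>
      RedN R n s t ∨
      ∃ ρ ∈ R, ∃ C : Ctx α, ∃ σ : ℕ → Term α,
        s = C.plug (ρ.lhs.subst σ) ∧ t = C.plug (ρ.rhs.subst σ) ∧
        ∀ c ∈ ρ.conds, Relation.ReflTransGen (RedN R n) (c.1.subst σ) (c.2.subst σ)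

/-- The reduction relation `→_R` of an oriented eCTRS. -/
def Red {α : Type u} (R : Set (ERule α)) (s t : Term α) : Prop := ∃ n, RedN R n s t

/-- `→*_R`. -/
def RedStar {α : Type u} (R : Set (ERule α)) : Term α → Term α → Prop :=
  Relation.ReflTransGen (Red R)

/-- The approximations of the reduction relation of a join CTRS
(conditions interpreted as joinability). -/
def JRedN {α : Type u} (R : Set (ERule α)) : ℕ → Term α → Term α → Prop
  | 0 => fun _ _ => False
  | n + 1 => fun s t =>
      JRedN R n s t ∨
      ∃ ρ ∈ R, ∃ C : Ctx α, ∃ σ : ℕ → Term α,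
        s = C.plug (ρ.lhs.subst σ) ∧ t = C.plug (ρ.rhs.subst σ) ∧
        ∀ c ∈ ρ.conds, ∃ w, Relation.ReflTransGen (JRedN R n) (c.1.subst σ) w ∧
          Relation.ReflTransGen (JRedN R n) (c.2.subst σ) w

/-- The reduction relation of a join CTRS. -/
def JRed {α : Type u} (R : Set (ERule α)) (s t : Term α) : Prop := ∃ n, JRedN R n s t

def JRedStar {α : Type u} (R : Set (ERule α)) : Term α → Term α → Prop :=
  Relation.ReflTransGen (JRed R)

/-- The underlying unconditional system `R_u`. -/
def Ru {α : Type u} (R : Set (ERule α)) : Set (ERule α) :=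
  (fun ρ : ERule α => ⟨ρ.lhs, ρ.rhs, []⟩) '' R

/-- Normal form w.r.t. a system. -/
def IsNF {α : Type u} (R : Set (ERule α)) (t : Term α) : Prop := ∀ w, ¬ Red R t w

/-! ## Unravelings for deterministic CTRSs -/

/-- The fixed-order sequence of a finite set of variables. -/
def seqOf (s : Finset ℕ) : List ℕ := s.sort (· ≤ ·)

/-- `U(t, x⃗)`: a U symbol applied to a term followed by a sequence of variables. -/
def mkU {α : Type u} (f : α) (t : Term α) (xs : List ℕ) : Term α :=
  .app f (t :: xs.map Term.var)

/-- Generic sequential unraveling of a single deterministic rule, where `carry j` is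
the variable sequence carried by the `j`-th U symbol. -/
def unravelWith {α : Type u} (carry : ℕ → List ℕ) (u : ℕ → α) (ρ : ERule α) :
    List (ERule α) :=
  (List.range (ρ.conds.length + 1)).map (fun j =>
    ⟨ if j = 0 then ρ.lhs else mkU (u (j-1)) (ρ.conds.getD (j-1) junkPair).2 (carry (j-1)),
      if j < ρ.conds.length then mkU (u j) (ρ.conds.getD j junkPair).1 (carry j) else ρ.rhs,
      [] ⟩)

/-- Ohlebusch's unraveling `U` of a single rule (carrying `X⃗ᵢ`). -/
def unravelU {α : Type u} (u : ℕ → α) (ρ : ERule α) : List (ERule α) :=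
  unravelWith (fun j => seqOf (ρ.Xset j)) u ρ

/-- The optimized unraveling `U_opt` of a single rule (carrying `Z⃗ᵢ`). -/
def unravelOpt {α : Type u} (u : ℕ → α) (ρ : ERule α) : List (ERule α) :=
  unravelWith (fun j => seqOf (ρ.Zset j)) u ρ

/-- `U(R)`. -/
def USys {α : Type u} (u : ERule α → ℕ → α) (R : Set (ERule α)) : Set (ERule α) :=
  { q | ∃ ρ ∈ R, q ∈ unravelU (u ρ) ρ }

/-- `U_opt(R)`. -/
def UoptSys {α : Type u} (u : ERule α → ℕ → α) (R : Set (ERule α)) : Set (ERule α) :=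
  { q | ∃ ρ ∈ R, q ∈ unravelOpt (u ρ) ρ }

/-- The U symbols introduced for the rules of `R`. -/
def USymbols {α : Type u} (u : ERule α → ℕ → α) (R : Set (ERule α)) : Set α :=
  { a | ∃ ρ ∈ R, ∃ i < ρ.conds.length, a = u ρ i }

/-- Freshness of the U symbols: they do not occur in `F` and are pairwise distinct. -/
def UFresh {α : Type u} (F : Set α) (u : ERule α → ℕ → α) (R : Set (ERule α)) : Prop :=
  (∀ ρ ∈ R, ∀ i < ρ.conds.length, u ρ i ∉ F) ∧
  (∀ ρ ∈ R, ∀ ρ' ∈ R, ∀ i < ρ.conds.length, ∀ j < ρ'.conds.length,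
      u ρ i = u ρ' j → ρ = ρ' ∧ i = j)

/-! ## Positions, parallel reduction, EV-safe reduction -/

abbrev Pos := List ℕ

/-- Subterm at a position. -/
def Term.sub? {α : Type u} : Pos → Term α → Option (Term α)
  | [], t => some t
  | _ :: _, .var _ => none
  | i :: p, .app _ ts => (ts[i]?).bind (Term.sub? p)

/-- Replacing the subterm at a position by `w`. -/
def Term.replaceAt {α : Type u} (w : Term α) : Pos → Term α → Term α
  | [], _ => w
  | _ :: _, .var x => .var x
  | i :: p, .app f ts =>
      .app f (ts.mapIdx (fun j s => if j = i then Term.replaceAt w p s else s))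

/-- `Pos_F(t)`: non-variable positions of `t`. -/
def PosF {α : Type u} (t : Term α) : Set Pos :=
  { p | ∃ f ts, Term.sub? p t = some (Term.app f ts) }

/-- `Pos_V(t)`: variable positions of `t`. -/
def PosV {α : Type u} (t : Term α) : Set Pos :=
  { p | ∃ x, Term.sub? p t = some (Term.var x) }

/-- One rewrite step of an eTRS at position `p`. -/
def RedAt {α : Type u} (R : Set (ERule α)) (p : Pos) (s t : Term α) : Prop :=
  ∃ ρ ∈ R, ρ.conds = [] ∧ ∃ σ : ℕ → Term α,
    Term.sub? p s = some (ρ.lhs.subst σ) ∧ t = Term.replaceAt (ρ.rhs.subst σ) p s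

/-- Two positions are parallel. -/
def ParallelPos (p q : Pos) : Prop := ¬ p <+: q ∧ ¬ q <+: p

/-- A sequence of single steps at the listed positions. -/
inductive RedSeqAt {α : Type u} (R : Set (ERule α)) : List Pos → Term α → Term α → Prop
  | nil (t : Term α) : RedSeqAt R [] t t
  | cons {ps s s' t} (p : Pos) : RedAt R p s s' → RedSeqAt R ps s' t →
      RedSeqAt R (p :: ps) s t

/-- One parallel rewrite step contracting the (pairwise parallel) positions in `P`. -/
def ParStep {α : Type u} (R : Set (ERule α)) (P : List Pos) (s t : Term α) : Prop :=
  P.Pairwise ParallelPos ∧ RedSeqAt R P s t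

/-- The parallel reduction `⇉_R`. -/
def ParRed {α : Type u} (R : Set (ERule α)) (s t : Term α) : Prop :=
  ∃ P, ParStep R P s t

/-- Parallel reduction where every contracted position is at or below a position of `Q`. -/
def ParRedBelow {α : Type u} (R : Set (ERule α)) (Q : Set Pos) (s t : Term α) : Prop :=
  ∃ P, ParStep R P s t ∧ ∀ p ∈ P, ∃ q ∈ Q, q <+: p

/-- `n`-fold composition of a relation. -/
def NFold {β : Type*} (r : β → β → Prop) : ℕ → β → β → Prop
  | 0 => Eq
  | n + 1 => fun a c => ∃ b, r a b ∧ NFold r n b c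

/-- The update of the set of basic positions w.r.t. extra variables after a rewrite step
at position `p` with rule `l → r`. -/
def nextB {α : Type u} (B : Set Pos) (p : Pos) (l r : Term α) : Set Pos :=
  { q | q ∈ B ∧ ¬ p <+: q }
  ∪ { q | ∃ q' ∈ PosF r, q = p ++ q' }
  ∪ { q | ∃ pv p' q', pv ∈ PosV l ∧ Term.sub? pv l = Term.sub? p' r ∧
        (p ++ pv ++ q') ∈ B ∧ q = p ++ p' ++ q' }

/-- Reduction sequences of an eTRS based on a set `B` of positions w.r.t. extra
variables, where additionally every term substituted for an extra variable of the
applied rule satisfies `T` (EV-instantiation on `T`). -/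
inductive EVSeq {α : Type u} (R : Set (ERule α)) (T : Term α → Prop) :
    Set Pos → Term α → Term α → Prop
  | refl (B : Set Pos) (t : Term α) : EVSeq R T B t t
  | step {B : Set Pos} {s s' t : Term α} (p : Pos) (ρ : ERule α) (σ : ℕ → Term α) :
      ρ ∈ R → ρ.conds = [] →
      Term.sub? p s = some (ρ.lhs.subst σ) →
      s' = Term.replaceAt (ρ.rhs.subst σ) p s →
      p ∈ B →
      (∀ x ∈ ρ.extraVars, T (σ x)) →
      EVSeq R T (nextB B p ρ.lhs ρ.rhs) s' t →
      EVSeq R T B s t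

/-- An EV-safe reduction sequence `s ↪*_R t`, EV-instantiated on `T`. -/
def EVSafeI {α : Type u} (R : Set (ERule α)) (T : Term α → Prop) (s t : Term α) : Prop :=
  EVSeq R T (PosF s) s t

/-- An EV-safe reduction sequence `s ↪*_R t`. -/
def EVSafe {α : Type u} (R : Set (ERule α)) (s t : Term α) : Prop :=
  EVSeq R (fun _ => True) (PosF s) s t

/-! ## Tree homomorphisms -/

/-- Applying the tree homomorphism determined by `h` to a term:
`φ(f(t₁, …, t_n)) = h(f){xᵢ ↦ φ(tᵢ)}` (the formal variable `xᵢ` is the variable `i - 1`). -/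
def applyHom {α : Type u} (h : α → Term α) : Term α → Term α
  | .var x => .var x
  | .app f ts =>
      Term.subst (fun i => (ts.attach.map (fun s => applyHom h s.1)).getD i (Term.var i)) (h f)
decreasing_by
  simp only [Term.app.sizeOf_spec]
  have := List.sizeOf_lt_of_mem s.2
  omega

/-- The image of a rule under a tree homomorphism. -/
def homRule {α : Type u} (h : α → Term α) (ρ : ERule α) : ERule α :=
  ⟨applyHom h ρ.lhs, applyHom h ρ.rhs,
    ρ.conds.map (fun c => (applyHom h c.1, applyHom h c.2))⟩

/-- The image of an eCTRS under a tree homomorphism. -/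
def homSys {α : Type u} (h : α → Term α) (R : Set (ERule α)) : Set (ERule α) :=
  homRule h '' R

/-- `h` determines a tree homomorphism from `T(G₁,V)` to `T(G₂,V)` (w.r.t. arity `ar`):
for `f ∈ G₁` of arity `n`, `h f` is a term over `G₂` with variables among `x₁, …, x_n`. -/
def TreeHom {α : Type u} (ar : α → ℕ) (G₁ G₂ : Set α) (h : α → Term α) : Prop :=
  ∀ f ∈ G₁, (h f).overSig G₂ ∧ ∀ x ∈ (h f).varList, x < ar f

/-- `F`-identical tree homomorphism. -/
def FIdentical {α : Type u} (ar : α → ℕ) (F : Set α) (h : α → Term α) : Prop :=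
  ∀ f ∈ F, h f = Term.app f ((List.range (ar f)).map Term.var)

/-- Non-erasing tree homomorphism (on the signature `G`). -/
def HomNonErasing {α : Type u} (ar : α → ℕ) (G : Set α) (h : α → Term α) : Prop :=
  ∀ f ∈ G, (h f).varFinset = Finset.range (ar f)

/-- The homomorphism is EV-preserving for the eTRS `S`. -/
def EVPreserving {α : Type u} (h : α → Term α) (S : Set (ERule α)) : Prop :=
  ∀ ρ ∈ S, (homRule h ρ).extraVars = ρ.extraVars

/-! ## Unravelings for join and normal CTRSs, and `Norm` -/

/-- Marchiori-style unraveling `U_J` of a join conditional rule. -/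
def unravelJ {α : Type u} (uj : ERule α → α) (ρ : ERule α) : List (ERule α) :=
  if ρ.conds.isEmpty then [ρ]
  else
    [ ⟨ρ.lhs,
        Term.app (uj ρ) ((ρ.conds.foldr (fun c acc => c.1 :: c.2 :: acc) []) ++
          (seqOf ρ.lhs.varFinset).map Term.var), []⟩,
      ⟨Term.app (uj ρ)
          (((List.range ρ.conds.length).foldr
              (fun j acc => Term.var (ρ.freshBase + j) :: Term.var (ρ.freshBase + j) :: acc) []) ++
            (seqOf ρ.lhs.varFinset).map Term.var),
        ρ.rhs, []⟩ ]

def UJSys {α : Type u} (uj : ERule α → α) (R : Set (ERule α)) : Set (ERule α) :=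
  { q | ∃ ρ ∈ R, q ∈ unravelJ uj ρ }

/-- Unraveling `U_N` of a normal conditional rule. -/
def unravelN {α : Type u} (un : ERule α → α) (ρ : ERule α) : List (ERule α) :=
  if ρ.conds.isEmpty then [ρ]
  else
    [ ⟨ρ.lhs,
        Term.app (un ρ) (ρ.conds.map Prod.fst ++ (seqOf ρ.lhs.varFinset).map Term.var), []⟩,
      ⟨Term.app (un ρ) (ρ.conds.map Prod.snd ++ (seqOf ρ.lhs.varFinset).map Term.var),
        ρ.rhs, []⟩ ]

def UNSys {α : Type u} (un : ERule α → α) (R : Set (ERule α)) : Set (ERule α) :=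
  { q | ∃ ρ ∈ R, q ∈ unravelN un ρ }

/-- `Norm` on rules: `l → r ⇐ eq(s₁,t₁) ↠ eq(⊤,⊤); …; eq(s_k,t_k) ↠ eq(⊤,⊤)`. -/
def normRule {α : Type u} (eqS topS : α) (ρ : ERule α) : ERule α :=
  ⟨ρ.lhs, ρ.rhs,
    ρ.conds.map (fun c =>
      (Term.app eqS [c.1, c.2], Term.app eqS [Term.app topS [], Term.app topS []]))⟩

/-- `Norm(R) = {eq(x,x) → eq(⊤,⊤)} ∪ {Norm(ρ) | ρ ∈ R}`. -/
def NormSys {α : Type u} (eqS topS : α) (R : Set (ERule α)) : Set (ERule α) :=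
  insert
    ⟨Term.app eqS [Term.var 0, Term.var 0],
      Term.app eqS [Term.app topS [], Term.app topS []], []⟩
    (normRule eqS topS '' R)

/-- A normal CTRS: a deterministic, non-LV CTRS all of whose condition right-hand
sides are ground normal forms w.r.t. `R_u`. -/
def NormalCTRS {α : Type u} (R : Set (ERule α)) : Prop :=
  ∀ ρ ∈ R, ρ.Det ∧ ρ.nonLV ∧ ∀ c ∈ ρ.conds, c.2.Ground ∧ IsNF (Ru R) c.2

/-! The left-hand sides of `U_opt(ρ)` are `l` and the terms `U^ρ_i(tᵢ, Z⃗ᵢ)`. Such a term is linear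
iff `tᵢ` is linear and `Var(tᵢ) ∩ Zᵢ = ∅`; since `Var(tᵢ) ⊆ Yᵢ`, the latter is `Var(tᵢ) ∩ Xᵢ = ∅`. -/

theorem disjoint_inf_right_of_le {β : Type*} [SemilatticeInf β] [OrderBot β] {a b c : β}
    (hac : a ≤ c) : Disjoint a (b ⊓ c) ↔ Disjoint a b := by
  rw [inf_comm, ← disjoint_assoc, inf_eq_left.2 hac]

theorem List.forall_getD_iff_forall_mem {β : Type*} (l : List β) (d : β) (p : β → Prop) :
    (∀ j < l.length, p (l.getD j d)) ↔ ∀ x ∈ l, p x := by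
  rw [List.forall_mem_iff_getElem]
  exact forall₂_congr fun j hj => by rw [List.getD_eq_getElem _ _ hj]

namespace Term

variable {α : Type u}

theorem varList_app (f : α) (ts : List (Term α)) :
    (app f ts).varList = ts.foldr (fun t acc => t.varList ++ acc) [] := by
  rw [varList]
  exact List.foldr_attach (f := fun t acc => varList t ++ acc) (b := []) (l := ts)

theorem varList_mkU (f : α) (t : Term α) (xs : List ℕ) :
    (mkU f t xs).varList = t.varList ++ xs := by
  rw [mkU, varList_app, List.foldr_cons]
  congr 1
  induction xs with
  | nil => rfl
  | cons x xs ih => simp only [List.map_cons, List.foldr_cons, ih, varList, List.singleton_append]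

theorem linear_mkU_seqOf_iff (f : α) (t : Term α) (s : Finset ℕ) :
    (mkU f t (seqOf s)).Linear ↔ t.Linear ∧ Disjoint t.varFinset s := by
  have hdisj : List.Disjoint t.varList (seqOf s) ↔ Disjoint t.varFinset s := by
    simp only [List.disjoint_left, Finset.disjoint_left, varFinset, List.mem_toFinset, seqOf,
      Finset.mem_sort]
  rw [Linear, varList_mkU, List.nodup_append', hdisj]
  simp only [seqOf, Finset.sort_nodup, true_and, Linear]

end Term

namespace ERule

variable {α : Type u}

theorem forall_unravelWith_LL_iff (carry : ℕ → List ℕ) (u : ℕ → α) (ρ : ERule α) :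
    (∀ q ∈ unravelWith carry u ρ, q.LL) ↔
      ρ.lhs.Linear ∧
        ∀ j < ρ.conds.length, (mkU (u j) (ρ.conds.getD j junkPair).2 (carry j)).Linear := by
  simp only [unravelWith, List.forall_mem_map, List.mem_range, LL]
  constructor
  · intro h
    exact ⟨h 0 (Nat.succ_pos _), fun j hj => h (j + 1) (Nat.succ_lt_succ hj)⟩
  · rintro ⟨hlhs, hconds⟩ (_ | j) hj
    · exact hlhs
    · exact hconds j (Nat.lt_of_succ_lt_succ hj)

theorem varFinset_cond_subset_Yset (ρ : ERule α) (j : ℕ) :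
    (ρ.conds.getD j junkPair).2.varFinset ⊆ ρ.Yset j :=
  Finset.subset_union_left.trans' Finset.subset_union_right

theorem disjoint_Zset_iff (ρ : ERule α) (j : ℕ) :
    Disjoint (ρ.conds.getD j junkPair).2.varFinset (ρ.Zset j) ↔
      Disjoint (ρ.conds.getD j junkPair).2.varFinset (ρ.Xset j) :=
  disjoint_inf_right_of_le (ρ.varFinset_cond_subset_Yset j)

end ERule

theorem uopt_ultraLL_iff_general {α : Type u} (u : ℕ → α) (ρ : ERule α) :
    (∀ q ∈ unravelOpt u ρ, q.LL) ↔
      (ρ.lhs.Linear ∧ (∀ c ∈ ρ.conds, c.2.Linear) ∧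
        ∀ j < ρ.conds.length,
          Disjoint (ρ.conds.getD j junkPair).2.varFinset (ρ.Xset j)) := by
  rw [unravelOpt, ERule.forall_unravelWith_LL_iff,
    ← List.forall_getD_iff_forall_mem ρ.conds junkPair (fun c => c.2.Linear)]
  simp only [Term.linear_mkU_seqOf_iff, ERule.disjoint_Zset_iff, imp_and, forall_and]

/-- An extended deterministic conditional rewrite rule
`ρ : l → r ⇐ s₁ ↠ t₁; …; s_k ↠ t_k` is ultra-left-linear w.r.t. the optimized
unraveling `U_opt` iff all of `l, t₁, …, t_k` are linear and
`Var(tᵢ) ∩ Xᵢ = ∅` for all `1 ≤ i ≤ k`. -/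
theorem uopt_ultraLL_iff {α : Type u} (u : ℕ → α) (ρ : ERule α) (hdet : ρ.Det) :
    (∀ q ∈ unravelOpt u ρ, q.LL) ↔
      (ρ.lhs.Linear ∧ (∀ c ∈ ρ.conds, c.2.Linear) ∧
        ∀ j < ρ.conds.length,
          Disjoint (ρ.conds.getD j junkPair).2.varFinset (ρ.Xset j)) :=
  uopt_ultraLL_iff_general u ρ
end

section
/- Let ρ: l → r ⇐ s_1 ↠ t_1; …; s_k ↠ t_k be an extended deterministic conditional rewrite rule. Then: (1) ρ is ultra-left-linear w.r.t. Ohlebusch's unraveling U if and only if all of l, t_1, …, t_k are linear and Var(t_i) ∩ X_i = ∅ for all 1 ≤ i ≤ k; (2) ρ is ultra-right-linear w.r.t. U if and only if r is linear and all of s_1, …, s_k are ground; (3) ρ is ultra-non-erasing w.r.t. U if and only if Var(l, t_1, …, t_k) ⊆ Var(r). -/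
set_option maxHeartbeats 1000000

universe u

/-!
The rules of `U(ρ)` are `l → U₁(s₁, X⃗₁)`, `Uᵢ(tᵢ, X⃗ᵢ) → Uᵢ₊₁(sᵢ₊₁, X⃗ᵢ₊₁)` and
`U_k(t_k, X⃗_k) → r`. Since `X⃗ᵢ` lists `Xᵢ` without repetition, `U(t, X⃗ᵢ)` is linear iff `t` is
linear and `Var(t) ∩ Xᵢ = ∅`; this gives (1) directly and, because determinism puts `Var(sᵢ)`
inside `Xᵢ`, forces every `sᵢ` to be ground in (2). For (3), the left-hand sides have variables
`X₁ ⊆ X₂ ⊆ … ⊆ X_{k+1} = Var(l, t₁, …, t_k)`, and each is contained in the right-hand side except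
possibly the last one, whose right-hand side is `r`.
-/

theorem List.foldr_union_append {β : Type*} [DecidableEq β] (A B : List (Finset β)) :
    (A ++ B).foldr (· ∪ ·) ∅ = A.foldr (· ∪ ·) ∅ ∪ B.foldr (· ∪ ·) ∅ := by
  induction A with
  | nil => simp
  | cons a A ih => simp [ih, Finset.union_assoc]

theorem List.forall_mem_iff_forall_getD {β : Type*} {l : List β} {d : β} {P : β → Prop} :
    (∀ x ∈ l, P x) ↔ ∀ j < l.length, P (l.getD j d) := by
  rw [List.forall_mem_iff_getElem]
  exact forall₂_congr fun j hj => by rw [List.getD_eq_getElem _ _ hj]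

namespace Term

variable {α : Type u}

theorem varList_var (x : ℕ) : (var x : Term α).varList = [x] := by
  rw [varList]

theorem ground_iff_varFinset_eq_empty {t : Term α} : t.Ground ↔ t.varFinset = ∅ :=
  (List.toFinset_eq_empty_iff _).symm

theorem Ground.linear {t : Term α} (h : t.Ground) : t.Linear := by
  rw [Linear, h]
  exact List.nodup_nil

theorem linear_and_disjoint_iff_ground {t : Term α} {s : Finset ℕ} (h : t.varFinset ⊆ s) :
    t.Linear ∧ Disjoint t.varFinset s ↔ t.Ground := by
  rw [disjoint_of_le_iff_left_eq_bot h, ground_iff_varFinset_eq_empty]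
  exact ⟨And.right, fun h₀ => ⟨(ground_iff_varFinset_eq_empty.mpr h₀).linear, h₀⟩⟩

end Term

section Unraveling

variable {α : Type u}

theorem varList_mkU (f : α) (t : Term α) (xs : List ℕ) :
    (mkU f t xs).varList = t.varList ++ xs := by
  rw [mkU, Term.varList_app, List.foldr_cons, List.foldr_map]
  congr 1
  induction xs with
  | nil => rfl
  | cons x xs ih => rw [List.foldr_cons, ih, Term.varList_var, List.singleton_append]

theorem varFinset_mkU_seqOf (f : α) (t : Term α) (s : Finset ℕ) :
    (mkU f t (seqOf s)).varFinset = t.varFinset ∪ s := by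
  simp [Term.varFinset, varList_mkU, seqOf]

theorem linear_mkU_seqOf_iff (f : α) (t : Term α) (s : Finset ℕ) :
    (mkU f t (seqOf s)).Linear ↔ t.Linear ∧ Disjoint t.varFinset s := by
  have hdisj : Disjoint t.varFinset s ↔ t.varList.Disjoint (seqOf s) := by
    rw [Term.varFinset, ← List.disjoint_toFinset_iff_disjoint, seqOf, Finset.sort_toFinset]
  rw [Term.Linear, Term.Linear, varList_mkU, List.nodup_append', hdisj]
  simp only [seqOf, Finset.sort_nodup, true_and]

namespace ERule

theorem Xset_zero (ρ : ERule α) : ρ.Xset 0 = ρ.lhs.varFinset := by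
  simp [Xset]

theorem Xset_succ (ρ : ERule α) {j : ℕ} (hj : j < ρ.conds.length) :
    ρ.Xset (j + 1) = ρ.Xset j ∪ (ρ.conds.getD j junkPair).2.varFinset := by
  rw [Xset, Xset, List.take_add_one, List.getElem?_eq_getElem hj,
    List.getD_eq_getElem _ _ hj, Option.toList_some, List.map_append, List.foldr_union_append]
  simp [Finset.union_assoc]

theorem Xset_length (ρ : ERule α) :
    ρ.Xset ρ.conds.length =
      ρ.lhs.varFinset ∪ (ρ.conds.map (fun c => c.2.varFinset)).foldr (· ∪ ·) ∅ := by
  rw [Xset, List.take_length]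

end ERule

/-- The `j`-th rule of `unravelWith carry u ρ`; with the paper's 1-based indices it is
`U_j(t_j, x⃗_j) → U_{j+1}(s_{j+1}, x⃗_{j+1})`, where `U_0(t_0, x⃗_0)` stands for `l` and
`U_{k+1}(s_{k+1}, x⃗_{k+1})` for `r`. -/
def unravelStep (carry : ℕ → List ℕ) (u : ℕ → α) (ρ : ERule α) (j : ℕ) : ERule α :=
  ⟨if j = 0 then ρ.lhs else mkU (u (j-1)) (ρ.conds.getD (j-1) junkPair).2 (carry (j-1)),
    if j < ρ.conds.length then mkU (u j) (ρ.conds.getD j junkPair).1 (carry j) else ρ.rhs,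
    []⟩

variable (carry : ℕ → List ℕ) (u : ℕ → α) (ρ : ERule α)

theorem forall_mem_unravelWith_iff {P : ERule α → Prop} :
    (∀ q ∈ unravelWith carry u ρ, P q) ↔
      ∀ j < ρ.conds.length + 1, P (unravelStep carry u ρ j) := by
  simp [unravelWith, unravelStep]

@[simp]
theorem unravelStep_zero_lhs : (unravelStep carry u ρ 0).lhs = ρ.lhs := rfl

@[simp]
theorem unravelStep_succ_lhs (j : ℕ) :
    (unravelStep carry u ρ (j + 1)).lhs = mkU (u j) (ρ.conds.getD j junkPair).2 (carry j) := rfl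

theorem unravelStep_rhs_of_lt {j : ℕ} (hj : j < ρ.conds.length) :
    (unravelStep carry u ρ j).rhs = mkU (u j) (ρ.conds.getD j junkPair).1 (carry j) :=
  if_pos hj

@[simp]
theorem unravelStep_length_rhs : (unravelStep carry u ρ ρ.conds.length).rhs = ρ.rhs :=
  if_neg (lt_irrefl _)

theorem forall_mem_unravelWith_LL_iff :
    (∀ q ∈ unravelWith carry u ρ, q.LL) ↔ ρ.lhs.Linear ∧
      ∀ j < ρ.conds.length, (mkU (u j) (ρ.conds.getD j junkPair).2 (carry j)).Linear := by
  rw [forall_mem_unravelWith_iff, Nat.forall_lt_succ_left]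
  rfl

theorem forall_mem_unravelWith_RL_iff :
    (∀ q ∈ unravelWith carry u ρ, q.RL) ↔ ρ.rhs.Linear ∧
      ∀ j < ρ.conds.length, (mkU (u j) (ρ.conds.getD j junkPair).1 (carry j)).Linear := by
  rw [forall_mem_unravelWith_iff, Nat.forall_lt_succ_right, and_comm, ERule.RL,
    unravelStep_length_rhs]
  exact and_congr_right' <| forall₂_congr fun j hj => by
    rw [ERule.RL, unravelStep_rhs_of_lt _ _ _ hj]

theorem varFinset_unravelU_lhs {j : ℕ} (hj : j ≤ ρ.conds.length) :
    (unravelStep (fun j => seqOf (ρ.Xset j)) u ρ j).lhs.varFinset = ρ.Xset j := by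
  cases j with
  | zero => rw [unravelStep_zero_lhs, ERule.Xset_zero]
  | succ j =>
    rw [unravelStep_succ_lhs, varFinset_mkU_seqOf, ERule.Xset_succ ρ hj, Finset.union_comm]

theorem forall_mem_unravelU_NE_iff :
    (∀ q ∈ unravelU u ρ, q.NE) ↔ ρ.Xset ρ.conds.length ⊆ ρ.rhs.varFinset := by
  have h_intermediate :
      ∀ j < ρ.conds.length, (unravelStep (fun j => seqOf (ρ.Xset j)) u ρ j).NE := fun j hj => by
    rw [ERule.NE, varFinset_unravelU_lhs u ρ hj.le, unravelStep_rhs_of_lt _ _ _ hj,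
      varFinset_mkU_seqOf]
    exact Finset.subset_union_right
  rw [unravelU, forall_mem_unravelWith_iff, Nat.forall_lt_succ_right,
    and_iff_right h_intermediate, ERule.NE, varFinset_unravelU_lhs u ρ le_rfl,
    unravelStep_length_rhs]

end Unraveling

/-- For an extended deterministic conditional rewrite rule
`ρ : l → r ⇐ s₁ ↠ t₁; …; s_k ↠ t_k`:
(1) `ρ` is ultra-left-linear w.r.t. Ohlebusch's unraveling `U` iff all of
`l, t₁, …, t_k` are linear and `Var(tᵢ) ∩ Xᵢ = ∅` for all `i`;
(2) `ρ` is ultra-right-linear w.r.t. `U` iff `r` is linear and all `sᵢ` are ground;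
(3) `ρ` is ultra-non-erasing w.r.t. `U` iff `Var(l, t₁, …, t_k) ⊆ Var(r)`. -/
theorem u_ultra_props_iff {α : Type u} (u : ℕ → α) (ρ : ERule α) (hdet : ρ.Det) :
    ((∀ q ∈ unravelU u ρ, q.LL) ↔
      (ρ.lhs.Linear ∧ (∀ c ∈ ρ.conds, c.2.Linear) ∧
        ∀ j < ρ.conds.length,
          Disjoint (ρ.conds.getD j junkPair).2.varFinset (ρ.Xset j))) ∧
    ((∀ q ∈ unravelU u ρ, q.RL) ↔
      (ρ.rhs.Linear ∧ ∀ c ∈ ρ.conds, c.1.Ground)) ∧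
    ((∀ q ∈ unravelU u ρ, q.NE) ↔
      ρ.lhs.varFinset ∪ ((ρ.conds.map (fun c => c.2.varFinset)).foldr (· ∪ ·) ∅) ⊆
        ρ.rhs.varFinset) := by
  refine ⟨?_, ?_, ?_⟩
  · rw [unravelU, forall_mem_unravelWith_LL_iff, List.forall_mem_iff_forall_getD (d := junkPair)]
    simp only [linear_mkU_seqOf_iff, forall₂_and]
  · rw [unravelU, forall_mem_unravelWith_RL_iff, List.forall_mem_iff_forall_getD (d := junkPair)]
    refine and_congr_right' (forall₂_congr fun j hj => ?_)
    rw [linear_mkU_seqOf_iff, Term.linear_and_disjoint_iff_ground (hdet j hj)]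
  · rw [forall_mem_unravelU_NE_iff, ERule.Xset_length]
end
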